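/- arXiv:2407.18984 — 9 statements merged into one kernel-verified Lean document; each statement's English description precedes it below -/
import Mathlib

section
/- Let 𝓕 be a semi-covariety and S ∈ 𝓕. Define the 𝓕-sequence S₀ = S, and S_{n+1} = S_n \ {μ(𝓕, S_n)} if S_n ≠ min(𝓕) (where μ(𝓕,T) is the least minimal generator x of T with T \ {x} ∈ 𝓕), and S_{n+1} = min(𝓕) otherwise. Then there exists k ∈ ℕ with min(𝓕) = S_k ⊊ S_{k-1} ⊊ ⋯ ⊊ S₀ = S, and each S_i \ S_{i+1} has exactly one element for i < k. -/
open Pointwise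

def IsNumericalSemigroup (S : Set ℕ) : Prop :=
  0 ∈ S ∧ (∀ a ∈ S, ∀ b ∈ S, a + b ∈ S) ∧ Sᶜ.Finite

def IsMinGen (S : Set ℕ) (x : ℕ) : Prop :=
  x ∈ S ∧ x ≠ 0 ∧ ¬ ∃ a ∈ S, ∃ b ∈ S, a ≠ 0 ∧ b ≠ 0 ∧ a + b = x

def IsSemiCovariety (𝓕 : Set (Set ℕ)) (m : Set ℕ) : Prop :=
  (∀ S ∈ 𝓕, IsNumericalSemigroup S) ∧ m ∈ 𝓕 ∧ (∀ S ∈ 𝓕, m ⊆ S) ∧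
  (∀ S ∈ 𝓕, ∀ T ∈ 𝓕, S ∩ T ∈ 𝓕) ∧
  (∀ S ∈ 𝓕, S ≠ m → ∃ x, IsMinGen S x ∧ S \ {x} ∈ 𝓕)

def IsFSet (𝓕 : Set (Set ℕ)) (m X : Set ℕ) : Prop :=
  X ∩ m = ∅ ∧ ∃ S ∈ 𝓕, X ⊆ S

def FClosure (𝓕 : Set (Set ℕ)) (X : Set ℕ) : Set ℕ :=
  ⋂₀ {S ∈ 𝓕 | X ⊆ S}

def IsCoeSemigroup (S : Set ℕ) : Prop :=
  IsNumericalSemigroup S ∧ ∀ x ∈ S, Odd x → x - 1 ∈ S ∧ x + 1 ∈ S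

/-- `mu 𝓕 S` is the least minimal generator `x` of `S` with `S \ {x} ∈ 𝓕`. -/
noncomputable def mu (𝓕 : Set (Set ℕ)) (S : Set ℕ) : ℕ :=
  sInf {x | IsMinGen S x ∧ S \ {x} ∈ 𝓕}

open Classical in
/-- The 𝓕-sequence associated to `S`. -/
noncomputable def FSeq (𝓕 : Set (Set ℕ)) (m S : Set ℕ) : ℕ → Set ℕ
  | 0 => S
  | n + 1 => if FSeq 𝓕 m S n = m then m else FSeq 𝓕 m S n \ {mu 𝓕 (FSeq 𝓕 m S n)}

lemma mu_spec {𝓕 : Set (Set ℕ)} {m T : Set ℕ} (h : IsSemiCovariety 𝓕 m)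
    (hT : T ∈ 𝓕) (hne : T ≠ m) :
    IsMinGen T (mu 𝓕 T) ∧ T \ {mu 𝓕 T} ∈ 𝓕 :=
  Nat.sInf_mem (h.2.2.2.2 T hT hne)

lemma fseq_mem {𝓕 : Set (Set ℕ)} {m S : Set ℕ} (h : IsSemiCovariety 𝓕 m)
    (hS : S ∈ 𝓕) : ∀ n, FSeq 𝓕 m S n ∈ 𝓕 := by
  intro n
  induction n with
  | zero => exact hS
  | succ n ih =>
    by_cases he : FSeq 𝓕 m S n = m
    · simp [FSeq, he, h.2.1]
    · simp only [FSeq, if_neg he]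
      exact (mu_spec h ih he).2

lemma fseq_subset {𝓕 : Set (Set ℕ)} (m S : Set ℕ) :
    ∀ n, FSeq 𝓕 m S (n + 1) ⊆ FSeq 𝓕 m S n ∨ FSeq 𝓕 m S (n + 1) = m := by
  intro n
  by_cases he : FSeq 𝓕 m S n = m
  · right; simp [FSeq, he]
  · left; simp only [FSeq, if_neg he]; exact Set.diff_subset

lemma fseq_step {𝓕 : Set (Set ℕ)} {m S : Set ℕ} (h : IsSemiCovariety 𝓕 m)
    (hS : S ∈ 𝓕) {n : ℕ} (hne : FSeq 𝓕 m S n ≠ m) :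
    FSeq 𝓕 m S (n + 1) = FSeq 𝓕 m S n \ {mu 𝓕 (FSeq 𝓕 m S n)} ∧
      mu 𝓕 (FSeq 𝓕 m S n) ∈ FSeq 𝓕 m S n := by
  constructor
  · simp [FSeq, hne]
  · exact (mu_spec h (fseq_mem h hS n) hne).1.1

lemma fseq_sub_S {𝓕 : Set (Set ℕ)} {m S : Set ℕ} (h : IsSemiCovariety 𝓕 m)
    (hS : S ∈ 𝓕) : ∀ n, FSeq 𝓕 m S n ⊆ S := by
  intro n
  induction n with
  | zero => exact subset_rfl
  | succ n ih =>
    by_cases he : FSeq 𝓕 m S n = m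
    · simp only [FSeq, if_pos he]
      exact he ▸ ih
    · simp only [FSeq, if_neg he]
      exact Set.diff_subset.trans ih

theorem stmt6 (𝓕 : Set (Set ℕ)) (m S : Set ℕ) (h : IsSemiCovariety 𝓕 m)
    (hS : S ∈ 𝓕) :
    ∃ k : ℕ, FSeq 𝓕 m S k = m ∧
      (∀ i < k, FSeq 𝓕 m S (i + 1) ⊂ FSeq 𝓕 m S i) ∧
      (∀ i < k, ∃ a : ℕ, FSeq 𝓕 m S i \ FSeq 𝓕 m S (i + 1) = {a}) := by
  have hmfin : (mᶜ : Set ℕ).Finite := (h.1 m h.2.1).2.2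
  have hfin : ∀ n, (FSeq 𝓕 m S n \ m).Finite := fun n =>
    hmfin.subset (fun x hx => hx.2)
  -- strict decrease of cardinality
  have hdec : ∀ n, FSeq 𝓕 m S n ≠ m →
      (FSeq 𝓕 m S (n + 1) \ m).ncard < (FSeq 𝓕 m S n \ m).ncard := by
    intro n hne
    obtain ⟨heq, hmem⟩ := fseq_step h hS hne
    have hmu_notin_m : mu 𝓕 (FSeq 𝓕 m S n) ∉ m := by
      intro hmm
      have := h.2.2.1 _ (mu_spec h (fseq_mem h hS n) hne).2 hmm
      exact this.2 rfl
    apply Set.ncard_lt_ncard _ (hfin n)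
    constructor
    · intro x hx
      rw [heq] at hx
      exact ⟨hx.1.1, hx.2⟩
    · intro hsub
      have := hsub ⟨hmem, hmu_notin_m⟩
      rw [heq] at this
      exact this.1.2 rfl
  -- eventually hit m
  have hex : ∃ n, FSeq 𝓕 m S n = m := by
    by_contra hc
    push_neg at hc
    have key : ∀ n, (FSeq 𝓕 m S n \ m).ncard + n ≤ (FSeq 𝓕 m S 0 \ m).ncard := by
      intro n
      induction n with
      | zero => simp
      | succ n ih =>
        have := hdec n (hc n)
        omega
    have := key ((FSeq 𝓕 m S 0 \ m).ncard + 1)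
    omega
  classical
  refine ⟨Nat.find hex, Nat.find_spec hex, ?_, ?_⟩
  · intro i hi
    have hne : FSeq 𝓕 m S i ≠ m := Nat.find_min hex hi
    obtain ⟨heq, hmem⟩ := fseq_step h hS hne
    rw [heq]
    constructor
    · exact Set.diff_subset
    · intro hsub
      exact (hsub hmem).2 rfl
  · intro i hi
    have hne : FSeq 𝓕 m S i ≠ m := Nat.find_min hex hi
    obtain ⟨heq, hmem⟩ := fseq_step h hS hne
    refine ⟨mu 𝓕 (FSeq 𝓕 m S i), ?_⟩
    rw [heq]
    ext x
    simp only [Set.mem_diff, Set.mem_singleton_iff]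
    constructor
    · rintro ⟨hx, hnx⟩
      by_contra hxx
      exact hnx ⟨hx, hxx⟩
    · rintro rfl
      exact ⟨hmem, fun hh => hh.2 rfl⟩
end

section
/- Let 𝓕 be a semi-covariety and S ∈ 𝓕. Then A = {x ∈ msg(S) : x ∉ min(𝓕)}, the set of minimal generators of S not belonging to min(𝓕), is an 𝓕-set and 𝓕[A] = S. -/
open Pointwise

lemma gen_subset (S U : Set ℕ) (hU0 : 0 ∈ U)
    (hUadd : ∀ a ∈ U, ∀ b ∈ U, a + b ∈ U)
    (hmsg : ∀ x, IsMinGen S x → x ∈ U) : S ⊆ U := by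
  intro x hx
  induction x using Nat.strong_induction_on with
  | _ x ih =>
    rcases eq_or_ne x 0 with rfl | hx0
    · exact hU0
    by_cases hmg : IsMinGen S x
    · exact hmsg x hmg
    · have : ∃ a ∈ S, ∃ b ∈ S, a ≠ 0 ∧ b ≠ 0 ∧ a + b = x := by
        by_contra hc
        exact hmg ⟨hx, hx0, hc⟩
      obtain ⟨a, ha, b, hb, ha0, hb0, hab⟩ := this
      have haU : a ∈ U := ih a (by omega) ha
      have hbU : b ∈ U := ih b (by omega) hb
      have := hUadd a haU b hbU
      rwa [hab] at this

theorem stmt8 (𝓕 : Set (Set ℕ)) (m S : Set ℕ) (h : IsSemiCovariety 𝓕 m)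
    (hS : S ∈ 𝓕) :
    IsFSet 𝓕 m {x | IsMinGen S x ∧ x ∉ m} ∧
      FClosure 𝓕 {x | IsMinGen S x ∧ x ∉ m} = S := by
  obtain ⟨hNS, hm, hmsub, hint, _⟩ := h
  set A := {x | IsMinGen S x ∧ x ∉ m} with hA
  have hAS : A ⊆ S := fun x hx => hx.1.1
  have hfs : IsFSet 𝓕 m A := by
    constructor
    · ext x
      simp only [Set.mem_inter_iff, Set.mem_empty_iff_false, iff_false]
      rintro ⟨⟨_, hxm⟩, hxm'⟩
      exact hxm hxm'
    · exact ⟨S, hS, hAS⟩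
  refine ⟨hfs, ?_⟩
  apply subset_antisymm
  · intro x hx
    exact hx S ⟨hS, hAS⟩
  · intro x hx
    intro T hT
    obtain ⟨hTF, hAT⟩ := hT
    have hST : S ∩ T ∈ 𝓕 := hint S hS T hTF
    have hNST := hNS _ hST
    have : S ⊆ S ∩ T := by
      apply gen_subset S (S ∩ T) hNST.1 hNST.2.1
      intro y hy
      by_cases hym : y ∈ m
      · exact hmsub _ hST hym
      · exact ⟨hy.1, hAT ⟨hy, hym⟩⟩
    exact (this hx).2
end

section
/- Let 𝓕 be a semi-covariety, A an 𝓕-set with S = 𝓕[A], and x a minimal generator of S with S \ {x} ∈ 𝓕. Then x ∈ A. -/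
open Pointwise

theorem stmt9 (𝓕 : Set (Set ℕ)) (m A S : Set ℕ) (x : ℕ)
    (h : IsSemiCovariety 𝓕 m) (hA : IsFSet 𝓕 m A) (hS : S = FClosure 𝓕 A)
    (hx : IsMinGen S x) (hx' : S \ {x} ∈ 𝓕) :
    x ∈ A := by
  by_contra hxA
  have hAS : A ⊆ S := by
    intro a ha
    rw [hS]
    exact fun T hT => hT.2 ha
  have hsub : S ⊆ S \ {x} := by
    conv_lhs => rw [hS]
    exact Set.sInter_subset_of_mem ⟨hx', fun a ha => ⟨hAS ha, fun h' => hxA (h' ▸ ha)⟩⟩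
  exact (hsub hx.1).2 rfl
end

section
/- Let Δ be a numerical semigroup and S a numerical semigroup with Δ ⊊ S. Then the least minimal generator x of S with S \ {x} ⊇ Δ and S \ {x} a numerical semigroup equals min(S \ Δ). -/
open Pointwise

theorem stmt11 (Δ S : Set ℕ) (hΔ : IsNumericalSemigroup Δ)
    (hS : IsNumericalSemigroup S) (hsub : Δ ⊂ S) :
    sInf {x | IsMinGen S x ∧ IsNumericalSemigroup (S \ {x}) ∧ Δ ⊆ S \ {x}} =
      sInf (S \ Δ) := by
  obtain ⟨hsub1, hne⟩ := hsub
  have hnonempty : (S \ Δ).Nonempty := by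
    rcases Set.not_subset.mp hne with ⟨x, hxS, hxΔ⟩
    exact ⟨x, hxS, hxΔ⟩
  set m := sInf (S \ Δ) with hm
  have hmem : m ∈ S \ Δ := Nat.sInf_mem hnonempty
  have hm0 : m ≠ 0 := fun h => hmem.2 (h ▸ hΔ.1)
  have hmin : ∀ y ∈ S \ Δ, m ≤ y := fun y hy => Nat.sInf_le hy
  have hmg : IsMinGen S m := by
    refine ⟨hmem.1, hm0, ?_⟩
    rintro ⟨a, ha, b, hb, ha0, hb0, hab⟩
    have haΔ : a ∈ Δ := by
      by_contra h
      have := hmin a ⟨ha, h⟩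
      omega
    have hbΔ : b ∈ Δ := by
      by_contra h
      have := hmin b ⟨hb, h⟩
      omega
    exact hmem.2 (hab ▸ hΔ.2.1 a haΔ b hbΔ)
  have hns : IsNumericalSemigroup (S \ {m}) := by
    refine ⟨⟨hS.1, by simpa using hm0.symm⟩, ?_, ?_⟩
    · rintro a ⟨ha, ham⟩ b ⟨hb, hbm⟩
      refine ⟨hS.2.1 a ha b hb, ?_⟩
      simp only [Set.mem_singleton_iff] at *
      intro hab
      rcases eq_or_ne a 0 with h0 | h0
      · exact hbm (by omega)
      rcases eq_or_ne b 0 with h1 | h1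
      · exact ham (by omega)
      exact hmg.2.2 ⟨a, ha, b, hb, h0, h1, hab⟩
    · have : (S \ {m})ᶜ = Sᶜ ∪ {m} := by
        ext x; simp [Set.mem_compl_iff]; tauto
      rw [this]
      exact hS.2.2.union (Set.finite_singleton m)
  have hΔsub : Δ ⊆ S \ {m} := fun x hx =>
    ⟨hsub1 hx, by simp only [Set.mem_singleton_iff]; rintro rfl; exact hmem.2 hx⟩
  refine le_antisymm (Nat.sInf_le ⟨hmg, hns, hΔsub⟩) ?_
  apply Nat.sInf_le
  have hL : m ∈ {x | IsMinGen S x ∧ IsNumericalSemigroup (S \ {x}) ∧ Δ ⊆ S \ {x}} :=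
    ⟨hmg, hns, hΔsub⟩
  have := Nat.sInf_mem (⟨m, hL⟩ : {x | IsMinGen S x ∧ IsNumericalSemigroup (S \ {x}) ∧ Δ ⊆ S \ {x}}.Nonempty)
  exact ⟨this.1.1, fun h => (this.2.2 h).2 rfl⟩
end

section
/- Let Δ be a numerical semigroup and S a numerical semigroup containing Δ. Then A = {x ∈ msg(S) : x ∉ Δ} is the unique θ(Δ)-minimal system of generators of S: θ(Δ)[A] = S, and every set B ⊆ ℕ \ Δ with θ(Δ)[B] = S satisfies A ⊆ B. -/
open Pointwise

/-- The smallest numerical semigroup containing `Δ` and `X`. -/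
def thetaClosure (Δ X : Set ℕ) : Set ℕ :=
  ⋂₀ {T | IsNumericalSemigroup T ∧ Δ ⊆ T ∧ X ⊆ T}

lemma theta_subset {Δ X S : Set ℕ} (hS : IsNumericalSemigroup S)
    (h1 : Δ ⊆ S) (h2 : X ⊆ S) : thetaClosure Δ X ⊆ S :=
  Set.sInter_subset_of_mem ⟨hS, h1, h2⟩

lemma subset_theta (Δ X : Set ℕ) : X ⊆ thetaClosure Δ X :=
  fun x hx => Set.mem_sInter.2 fun _ hT => hT.2.2 hx

lemma delta_subset_theta (Δ X : Set ℕ) : Δ ⊆ thetaClosure Δ X :=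
  fun x hx => Set.mem_sInter.2 fun _ hT => hT.2.1 hx

lemma theta_eq_closure (Δ X : Set ℕ) (hΔ : IsNumericalSemigroup Δ) :
    thetaClosure Δ X ⊆ (AddSubmonoid.closure (Δ ∪ X) : AddSubmonoid ℕ) := by
  apply Set.sInter_subset_of_mem
  refine ⟨⟨?_, ?_, ?_⟩, ?_, ?_⟩
  · exact AddSubmonoid.zero_mem _
  · intro a ha b hb; exact AddSubmonoid.add_mem _ ha hb
  · apply Set.Finite.subset hΔ.2.2
    intro x hx hxΔ
    exact hx (AddSubmonoid.subset_closure (Or.inl hxΔ))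
  · intro x hx; exact AddSubmonoid.subset_closure (Or.inl hx)
  · intro x hx; exact AddSubmonoid.subset_closure (Or.inr hx)

theorem stmt13 (Δ S : Set ℕ) (hΔ : IsNumericalSemigroup Δ)
    (hS : IsNumericalSemigroup S) (hsub : Δ ⊆ S) :
    thetaClosure Δ {x | IsMinGen S x ∧ x ∉ Δ} = S ∧
      ∀ B : Set ℕ, (∀ b ∈ B, b ∉ Δ) → thetaClosure Δ B = S →
        {x | IsMinGen S x ∧ x ∉ Δ} ⊆ B := by
  set A : Set ℕ := {x | IsMinGen S x ∧ x ∉ Δ} with hA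
  have hAS : A ⊆ S := fun x hx => hx.1.1
  constructor
  · apply Set.Subset.antisymm (theta_subset hS hsub hAS)
    intro s hs
    rw [thetaClosure, Set.mem_sInter]
    rintro T ⟨hT, hΔT, hAT⟩
    induction s using Nat.strong_induction_on with
    | _ s ih =>
      rcases Nat.eq_zero_or_pos s with h0 | hpos
      · subst h0; exact hT.1
      by_cases hmg : IsMinGen S s
      · by_cases hsΔ : s ∈ Δ
        · exact hΔT hsΔ
        · exact hAT ⟨hmg, hsΔ⟩
      · simp only [IsMinGen, not_and, not_not] at hmg
        obtain ⟨a, haS, b, hbS, ha0, hb0, hab⟩ := hmg hs hpos.ne'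
        have : a + b ∈ T := hT.2.1 a (ih a (by omega) haS) b (ih b (by omega) hbS)
        rwa [hab] at this
  · intro B hBΔ hBS
    intro x hx
    obtain ⟨hxmg, hxΔ⟩ := hx
    have hBsubS : B ⊆ S := hBS ▸ subset_theta Δ B
    have hxS : x ∈ S := hxmg.1
    have hxcl : x ∈ (AddSubmonoid.closure (Δ ∪ B) : AddSubmonoid ℕ) :=
      theta_eq_closure Δ B hΔ (hBS ▸ hxS)
    have key : ∀ y ∈ (AddSubmonoid.closure (Δ ∪ B) : AddSubmonoid ℕ),
        y ∈ S ∧ (y = 0 ∨ y ∈ Δ ∪ B ∨ ∃ a ∈ S, ∃ b ∈ S, a ≠ 0 ∧ b ≠ 0 ∧ a + b = y) := by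
      intro y hy
      induction hy using AddSubmonoid.closure_induction with
      | mem z hz =>
        refine ⟨?_, Or.inr (Or.inl hz)⟩
        rcases hz with h | h
        · exact hsub h
        · exact hBsubS h
      | zero => exact ⟨hS.1, Or.inl rfl⟩
      | add a b _ _ iha ihb =>
        refine ⟨hS.2.1 a iha.1 b ihb.1, ?_⟩
        rcases Nat.eq_zero_or_pos a with h0 | hapos
        · subst h0; simpa using ihb.2
        rcases Nat.eq_zero_or_pos b with h0 | hbpos
        · subst h0; simpa using iha.2
        exact Or.inr (Or.inr ⟨a, iha.1, b, ihb.1, hapos.ne', hbpos.ne', rfl⟩)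
    obtain ⟨_, hcase⟩ := key x hxcl
    rcases hcase with h0 | hmem | hdec
    · exact absurd h0 hxmg.2.1
    · rcases hmem with h | h
      · exact absurd h hxΔ
      · exact h
    · exact absurd hdec hxmg.2.2
end

section
/- Let Δ be a numerical semigroup and x, y ∈ ℕ \ Δ. Then Δ + ⟨x⟩ = Δ + ⟨y⟩ if and only if x = y. Consequently, the number of numerical semigroups S ⊇ Δ of θ(Δ)-rank 1 equals the genus g(Δ) = #(ℕ \ Δ). -/
open Pointwise

lemma mem_add_closure {Δ : Set ℕ} {x z : ℕ} :
    z ∈ Δ + ↑(AddSubmonoid.closure ({x} : Set ℕ)) ↔ ∃ d ∈ Δ, ∃ k : ℕ, d + k * x = z := by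
  constructor
  · rintro ⟨a, ha, b, hb, rfl⟩
    obtain ⟨k, hk⟩ := AddSubmonoid.mem_closure_singleton.mp hb
    exact ⟨a, ha, k, by simp [← hk, smul_eq_mul]⟩
  · rintro ⟨d, hd, k, rfl⟩
    exact ⟨d, hd, k * x, AddSubmonoid.mem_closure_singleton.mpr ⟨k, by simp [smul_eq_mul]⟩, rfl⟩

lemma self_mem_add_closure {Δ : Set ℕ} (h0 : 0 ∈ Δ) (x : ℕ) :
    x ∈ Δ + ↑(AddSubmonoid.closure ({x} : Set ℕ)) :=
  mem_add_closure.mpr ⟨0, h0, 1, by ring⟩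

lemma ge_of_mem {Δ : Set ℕ} {x y : ℕ} (hx : x ∉ Δ)
    (h : x ∈ Δ + ↑(AddSubmonoid.closure ({y} : Set ℕ))) : y ≤ x := by
  obtain ⟨d, hd, k, hk⟩ := mem_add_closure.mp h
  rcases Nat.eq_zero_or_pos k with rfl | hkpos
  · simp at hk; exact absurd (hk ▸ hd) hx
  · calc y ≤ k * y := Nat.le_mul_of_pos_left y hkpos
      _ ≤ d + k * y := Nat.le_add_left _ _
      _ = x := hk

theorem stmt14 (Δ : Set ℕ) (hΔ : IsNumericalSemigroup Δ) :
    (∀ x ∉ Δ, ∀ y ∉ Δ,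
      (Δ + ↑(AddSubmonoid.closure ({x} : Set ℕ)) =
        Δ + ↑(AddSubmonoid.closure ({y} : Set ℕ)) ↔ x = y)) ∧
    {S : Set ℕ | S ≠ Δ ∧ ∃ x, x ∉ Δ ∧
      S = Δ + ↑(AddSubmonoid.closure ({x} : Set ℕ))}.ncard = Δᶜ.ncard := by
  obtain ⟨h0, hadd, hfin⟩ := hΔ
  have key : ∀ x ∉ Δ, ∀ y ∉ Δ,
      (Δ + ↑(AddSubmonoid.closure ({x} : Set ℕ)) =
        Δ + ↑(AddSubmonoid.closure ({y} : Set ℕ)) ↔ x = y) := by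
    intro x hx y hy
    constructor
    · intro h
      have h1 : y ≤ x := ge_of_mem hx (h ▸ self_mem_add_closure h0 x)
      have h2 : x ≤ y := ge_of_mem hy (h.symm ▸ self_mem_add_closure h0 y)
      omega
    · rintro rfl; rfl
  refine ⟨key, ?_⟩
  have : {S : Set ℕ | S ≠ Δ ∧ ∃ x, x ∉ Δ ∧
      S = Δ + ↑(AddSubmonoid.closure ({x} : Set ℕ))} =
      (fun x => Δ + ↑(AddSubmonoid.closure ({x} : Set ℕ))) '' Δᶜ := by
    ext S
    simp only [Set.mem_setOf_eq, Set.mem_image, Set.mem_compl_iff]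
    constructor
    · rintro ⟨_, x, hx, rfl⟩; exact ⟨x, hx, rfl⟩
    · rintro ⟨x, hx, rfl⟩
      refine ⟨?_, x, hx, rfl⟩
      intro h
      exact hx (h ▸ self_mem_add_closure h0 x)
  rw [this]
  exact Set.ncard_image_of_injOn (fun a ha b hb hab => (key a ha b hb).mp hab)
end

section
/- Let S be a numerical semigroup. Then S is a Coe-semigroup if and only if for every odd minimal generator x of S, {x-1, x, x+1} ⊆ S. -/
open Pointwise

theorem stmt16 (S : Set ℕ) (hS : IsNumericalSemigroup S) :
    IsCoeSemigroup S ↔ ∀ x, IsMinGen S x → Odd x → x - 1 ∈ S ∧ x + 1 ∈ S := by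
  constructor
  · rintro ⟨-, h⟩ x hx hodd
    exact h x hx.1 hodd
  · intro h
    refine ⟨hS, ?_⟩
    intro x
    induction x using Nat.strong_induction_on with
    | _ x ih =>
      intro hx hodd
      by_cases hgen : IsMinGen S x
      · exact h x hgen hodd
      · have hx0 : x ≠ 0 := by rintro rfl; simp [Nat.odd_iff] at hodd
        simp only [IsMinGen, not_and, not_not] at hgen
        obtain ⟨a, ha, b, hb, ha0, hb0, hab⟩ := hgen hx hx0
        have hlt : a < x ∧ b < x := by omega
        rcases Nat.even_or_odd a with hea | hoa
        · -- b odd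
          have hob : Odd b := by
            rw [Nat.odd_iff] at hodd ⊢
            rw [Nat.even_iff] at hea
            omega
          obtain ⟨h1, h2⟩ := ih b hlt.2 hb hob
          have hb1 : 1 ≤ b := Nat.one_le_iff_ne_zero.mpr hb0
          constructor
          · have := hS.2.1 a ha (b - 1) h1; convert this using 1; omega
          · have := hS.2.1 a ha (b + 1) h2; convert this using 1; omega
        · obtain ⟨h1, h2⟩ := ih a hlt.1 ha hoa
          have ha1 : 1 ≤ a := Nat.one_le_iff_ne_zero.mpr (by omega)
          constructor
          · have := hS.2.1 (a - 1) h1 b hb; convert this using 1; omega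
          · have := hS.2.1 (a + 1) h2 b hb; convert this using 1; omega
end

section
/- Let F be a positive odd integer and X a set of positive integers less than F. Define C(X) = X ∪ ⋃_{x ∈ X, x odd} {x-1, x+1}. If F ∉ ⟨C(X)⟩, then ⟨C(X)⟩ ∪ {F+1, F+2, ...} is the smallest Coe-semigroup with Frobenius number F containing X. -/
open Pointwise

/-- `coatedSet X = X ∪ ⋃_{x ∈ X, x odd} {x-1, x+1}`. -/
def coatedSet (X : Set ℕ) : Set ℕ :=
  X ∪ {y | ∃ x ∈ X, Odd x ∧ (y = x - 1 ∨ y = x + 1)}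

lemma coat_pm (X : Set ℕ) (x : ℕ) (hx : x ∈ AddSubmonoid.closure (coatedSet X)) :
    Odd x → x - 1 ∈ AddSubmonoid.closure (coatedSet X) ∧
      x + 1 ∈ AddSubmonoid.closure (coatedSet X) := by
  induction hx using AddSubmonoid.closure_induction with
  | mem g hg =>
    intro hodd
    rcases hg with hgX | ⟨y, hyX, hy, hgy⟩
    · constructor
      · exact AddSubmonoid.subset_closure (Or.inr ⟨g, hgX, hodd, Or.inl rfl⟩)
      · exact AddSubmonoid.subset_closure (Or.inr ⟨g, hgX, hodd, Or.inr rfl⟩)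
    · exfalso
      obtain ⟨k, hk⟩ := hy
      rcases hgy with rfl | rfl
      · rw [Nat.odd_iff] at hodd; omega
      · rw [Nat.odd_iff] at hodd; omega
  | zero => intro hodd; simp [Nat.odd_iff] at hodd
  | add a b ha hb iha ihb =>
    intro hodd
    rcases Nat.even_or_odd a with hea | hoa
    · have hob : Odd b := by
        rw [Nat.odd_iff] at hodd ⊢; rw [Nat.even_iff] at hea; omega
      obtain ⟨hb1, hb2⟩ := ihb hob
      have hble : 1 ≤ b := hob.pos
      constructor
      · have : a + b - 1 = a + (b - 1) := by omega
        rw [this]; exact AddSubmonoid.add_mem _ ha hb1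
      · have : a + b + 1 = a + (b + 1) := by omega
        rw [this]; exact AddSubmonoid.add_mem _ ha hb2
    · obtain ⟨ha1, ha2⟩ := iha hoa
      have hale : 1 ≤ a := hoa.pos
      constructor
      · have : a + b - 1 = (a - 1) + b := by omega
        rw [this]; exact AddSubmonoid.add_mem _ ha1 hb
      · have : a + b + 1 = (a + 1) + b := by omega
        rw [this]; exact AddSubmonoid.add_mem _ ha2 hb

theorem stmt18 (F : ℕ) (hFpos : 0 < F) (hF : Odd F) (X : Set ℕ)
    (hX : ∀ x ∈ X, 0 < x ∧ x < F)
    (h : F ∉ AddSubmonoid.closure (coatedSet X)) :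
    IsLeast {S : Set ℕ | IsCoeSemigroup S ∧ IsGreatest Sᶜ F ∧ X ⊆ S}
      (↑(AddSubmonoid.closure (coatedSet X)) ∪ {n | F + 1 ≤ n}) := by
  set M := AddSubmonoid.closure (coatedSet X) with hM
  constructor
  · refine ⟨⟨⟨Or.inl M.zero_mem, ?_, ?_⟩, ?_⟩, ⟨?_, ?_⟩, ?_⟩
    · rintro a (haM | haF) b (hbM | hbF)
      · exact Or.inl (AddSubmonoid.add_mem _ haM hbM)
      · exact Or.inr (by simp only [Set.mem_setOf_eq] at *; omega)
      · exact Or.inr (by simp only [Set.mem_setOf_eq] at *; omega)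
      · exact Or.inr (by simp only [Set.mem_setOf_eq] at *; omega)
    · apply Set.Finite.subset (Set.finite_Iic F)
      intro n hn
      simp only [Set.mem_compl_iff, Set.mem_union, Set.mem_setOf_eq, not_or, not_le] at hn
      exact Nat.lt_succ_iff.mp hn.2
    · rintro x (hxM | hxF) hodd
      · by_cases hle : F + 1 ≤ x
        · have hx2 : F + 2 ≤ x := by
            rcases Nat.eq_or_lt_of_le hle with heq | hlt
            · exfalso; rw [Nat.odd_iff] at hodd hF; omega
            · omega
          exact ⟨Or.inr (by simp only [Set.mem_setOf_eq]; omega),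
                 Or.inr (by simp only [Set.mem_setOf_eq]; omega)⟩
        · obtain ⟨h1, h2⟩ := coat_pm X x hxM hodd
          exact ⟨Or.inl h1, Or.inl h2⟩
      · simp only [Set.mem_setOf_eq] at hxF
        have hx2 : F + 2 ≤ x := by
          rcases Nat.eq_or_lt_of_le hxF with heq | hlt
          · exfalso; rw [Nat.odd_iff] at hodd hF; omega
          · omega
        exact ⟨Or.inr (by simp only [Set.mem_setOf_eq]; omega),
               Or.inr (by simp only [Set.mem_setOf_eq]; omega)⟩
    · simp only [Set.mem_compl_iff, Set.mem_union, Set.mem_setOf_eq, not_or, not_le]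
      exact ⟨h, by omega⟩
    · intro n hn
      simp only [Set.mem_compl_iff, Set.mem_union, Set.mem_setOf_eq, not_or, not_le] at hn
      omega
    · intro x hxX
      exact Or.inl (AddSubmonoid.subset_closure (Or.inl hxX))
  · rintro S ⟨⟨⟨hS0, hSadd, hSfin⟩, hScoe⟩, ⟨hFc, hFub⟩, hXS⟩
    have htail : ∀ n, F + 1 ≤ n → n ∈ S := by
      intro n hn
      by_contra hns
      exact absurd (hFub hns) (by omega)
    have hcoat : coatedSet X ⊆ S := by
      rintro g (hgX | ⟨y, hyX, hy, hgy⟩)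
      · exact hXS hgX
      · obtain ⟨h1, h2⟩ := hScoe y (hXS hyX) hy
        rcases hgy with rfl | rfl
        · exact h1
        · exact h2
    rintro x (hxM | hxF)
    · induction hxM using AddSubmonoid.closure_induction with
      | mem g hg => exact hcoat hg
      | zero => exact hS0
      | add a b ha hb iha ihb => exact hSadd a iha b ihb
    · exact htail x hxF
end

section
/- Let F be an odd integer and x an odd integer with 3 ≤ x ≤ F - 2. Then F ∉ ⟨x-1, x, x+1⟩ if and only if 2·⌊F/(x-1)⌋ < F mod (x-1). -/
open Pointwise

theorem stmt19 (F x : ℕ) (hF : Odd F) (hx : Odd x) (h3 : 3 ≤ x)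
    (hxF : x ≤ F - 2) :
    F ∉ AddSubmonoid.closure ({x - 1, x, x + 1} : Set ℕ) ↔
      2 * (F / (x - 1)) < F % (x - 1) := by
  set a := x - 1 with ha
  have ha2 : 2 ≤ a := by omega
  have main : F ∈ AddSubmonoid.closure ({x - 1, x, x + 1} : Set ℕ) ↔
      F % a ≤ 2 * (F / a) := by
    constructor
    · intro hmem
      let M : AddSubmonoid ℕ :=
        { carrier := {n | ∃ q t, t ≤ 2 * q ∧ n = a * q + t}
          zero_mem' := ⟨0, 0, by omega, by omega⟩
          add_mem' := by
            rintro p r ⟨q1, t1, h1, rfl⟩ ⟨q2, t2, h2, rfl⟩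
            exact ⟨q1 + q2, t1 + t2, by omega, by ring⟩ }
      have hle : AddSubmonoid.closure ({x - 1, x, x + 1} : Set ℕ) ≤ M := by
        apply AddSubmonoid.closure_le.mpr
        rintro y (rfl | rfl | rfl)
        · exact ⟨1, 0, by omega, by omega⟩
        · exact ⟨1, 1, by omega, by omega⟩
        · exact ⟨1, 2, by omega, by omega⟩
      obtain ⟨q, t, hqt, heq⟩ := hle hmem
      have e1 : F % a = t % a := by rw [heq, Nat.mul_add_mod]
      have e2 : F / a = q + t / a := by rw [heq, Nat.mul_add_div (by omega)]
      have e3 : t % a ≤ t := Nat.mod_le t a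
      calc F % a = t % a := e1
        _ ≤ t := e3
        _ ≤ 2 * q := hqt
        _ ≤ 2 * (F / a) := Nat.mul_le_mul_left 2 (e2 ▸ Nat.le_add_right q (t / a))
    · intro hineq
      set q := F / a with hq
      set t := F % a with ht
      set k := t - q with hk
      set j := t - 2 * k with hj
      set i := q - j - k with hi
      have hjk : j + 2 * k = t := by omega
      have hijk : i + j + k = q := by omega
      have hdm : a * q + t = F := Nat.div_add_mod F a
      have heqF : F = i * (x - 1) + (j * x + k * (x + 1)) := by
        have hx1 : x = a + 1 := by omega
        have key : i * a + (j * (a + 1) + k * (a + 1 + 1)) = a * (i + j + k) + (j + 2 * k) := by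
          ring
        rw [← ha, hx1, key, hijk, hjk]
        exact hdm.symm
      rw [heqF]
      have m1 : x - 1 ∈ AddSubmonoid.closure ({x - 1, x, x + 1} : Set ℕ) :=
        AddSubmonoid.subset_closure (by simp)
      have m2 : x ∈ AddSubmonoid.closure ({x - 1, x, x + 1} : Set ℕ) :=
        AddSubmonoid.subset_closure (by simp)
      have m3 : x + 1 ∈ AddSubmonoid.closure ({x - 1, x, x + 1} : Set ℕ) :=
        AddSubmonoid.subset_closure (by simp)
      have n1 := nsmul_mem m1 i
      have n2 := nsmul_mem m2 j
      have n3 := nsmul_mem m3 k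
      rw [nsmul_eq_mul] at n1 n2 n3
      exact add_mem n1 (add_mem n2 n3)
  rw [show (2 * (F / a) < F % a) ↔ ¬ F % a ≤ 2 * (F / a) from by omega, ← main]
end
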